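/- Let b*_0 ∈ ℂ^{2N+1} (N ≥ 2) be the real 3-mode minimizer of mass m centered at site 0. Then b*_0 is an eigenvector of the real Hessian ∇²H(b*_0) with ∇²H(b*_0) b*_0 = −(42m/11) b*_0, and i b*_0 lies in the kernel of (14m/11) I + ∇²H(b*_0). -/

import Mathlib

/-- The real 3-mode minimizer of mass `m` centered at site `0`. -/
noncomputable def bstar (m : ℝ) : ℤ → ℂ := fun j =>
  if j = -1 ∨ j = 1 then ((Real.sqrt (3 * m / 11) : ℝ) : ℂ)
  else if j = 0 then ((Real.sqrt (5 * m / 11) : ℝ) : ℂ)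
  else 0

/-- The action of the real Hessian `∇²H(b)` (of `H` viewed as a function on
`ℝ^{4N+2} ≅ ℂ^{2N+1}`) on a real direction `ξ`, obtained by differentiating the
gradient `(∇H(b))_j = 2(|b_j|² b_j − 2 conj(b_j) b_{j-1}² − 2 b_{j+1}² conj(b_j))`
in the direction `ξ`. -/
noncomputable def hessH (b ξ : ℤ → ℂ) (j : ℤ) : ℂ :=
  2 * ((b j) ^ 2 * (starRingEnd ℂ) (ξ j)
      + 2 * ((‖b j‖ : ℝ) : ℂ) ^ 2 * ξ j
    - 2 * ((starRingEnd ℂ) (ξ j) * (b (j - 1)) ^ 2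
      + 2 * (starRingEnd ℂ) (b j) * b (j - 1) * ξ (j - 1))
    - 2 * (2 * b (j + 1) * ξ (j + 1) * (starRingEnd ℂ) (b j)
      + (b (j + 1)) ^ 2 * (starRingEnd ℂ) (ξ j)))


/-!
`H` is homogeneous of degree four and invariant under the phase rotation `b ↦ e^{iθ} b`.
Differentiating the gradient along the rays `t ↦ t b` and `θ ↦ e^{iθ} b` gives, at every `b`,
`∇²H(b) b = 3 ∇H(b)` (Euler) and `∇²H(b) (i b) = i ∇H(b)`. The point `b*_0` is critical for `H` on
the sphere of mass `m`, with `∇H(b*_0) = −(14m/11) b*_0`, and both claims follow.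
-/

open ComplexConjugate

/-- The gradient `∇H(b)` under the same identification `ℝ^{4N+2} ≅ ℂ^{2N+1}` as `hessH`. -/
noncomputable def gradH (b : ℤ → ℂ) (j : ℤ) : ℂ :=
  2 * (((‖b j‖ : ℝ) : ℂ) ^ 2 * b j - 2 * conj (b j) * b (j - 1) ^ 2
    - 2 * b (j + 1) ^ 2 * conj (b j))

theorem hessH_self (b : ℤ → ℂ) (j : ℤ) : hessH b b j = 3 * gradH b j := by
  have hnorm := Complex.mul_conj' (b j)
  unfold hessH gradH
  linear_combination (2 * b j) * hnorm

theorem hessH_I_mul (b : ℤ → ℂ) (j : ℤ) :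
    hessH b (fun k => Complex.I * b k) j = Complex.I * gradH b j := by
  have hnorm := Complex.mul_conj' (b j)
  simp only [hessH, gradH, map_mul, Complex.conj_I]
  linear_combination (-2 * Complex.I * b j) * hnorm

theorem gradH_of_conj_eq {b : ℤ → ℂ} (hb : ∀ j, conj (b j) = b j) (j : ℤ) :
    gradH b j = 2 * b j * (b j ^ 2 - 2 * b (j - 1) ^ 2 - 2 * b (j + 1) ^ 2) := by
  have hnorm := Complex.mul_conj' (b j)
  rw [hb] at hnorm
  rw [gradH, hb]
  linear_combination (-2 * b j) * hnorm

theorem conj_bstar (m : ℝ) (j : ℤ) : conj (bstar m j) = bstar m j := by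
  unfold bstar
  split_ifs <;> simp

theorem bstar_of_one_lt_natAbs (m : ℝ) {j : ℤ} (hj : 1 < j.natAbs) : bstar m j = 0 := by
  have : j ≠ -1 ∧ j ≠ 1 ∧ j ≠ 0 := by omega
  simp [bstar, this]

theorem sq_bstar_zero {m : ℝ} (hm : 0 ≤ m) : bstar m 0 ^ 2 = 5 * m / 11 := by
  rw [bstar, if_neg (by decide), if_pos rfl, ← Complex.ofReal_pow, Real.sq_sqrt (by positivity)]
  push_cast
  ring

theorem sq_bstar_of_natAbs_eq_one {m : ℝ} (hm : 0 ≤ m) {j : ℤ} (hj : j.natAbs = 1) :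
    bstar m j ^ 2 = 3 * m / 11 := by
  rw [bstar, if_pos (by omega), ← Complex.ofReal_pow, Real.sq_sqrt (by positivity)]
  push_cast
  ring

/-- `b*_0` is a critical point of `H` on the sphere of mass `m`, with multiplier `−14m/11`. -/
theorem gradH_bstar {m : ℝ} (hm : 0 ≤ m) (j : ℤ) :
    gradH (bstar m) j = -(14 * m / 11) * bstar m j := by
  rw [gradH_of_conj_eq (conj_bstar m)]
  rcases (by omega : j = 0 ∨ j = 1 ∨ j = -1 ∨ 1 < j.natAbs) with rfl | rfl | rfl | hj
  · rw [sq_bstar_zero hm, sq_bstar_of_natAbs_eq_one hm (by decide : (0 - 1 : ℤ).natAbs = 1),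
      sq_bstar_of_natAbs_eq_one hm (by decide : (0 + 1 : ℤ).natAbs = 1)]
    ring
  · rw [sq_bstar_of_natAbs_eq_one hm (by decide : (1 : ℤ).natAbs = 1),
      show (1 - 1 : ℤ) = 0 by norm_num, sq_bstar_zero hm,
      bstar_of_one_lt_natAbs m (by decide : 1 < (1 + 1 : ℤ).natAbs)]
    ring
  · rw [sq_bstar_of_natAbs_eq_one hm (by decide : (-1 : ℤ).natAbs = 1),
      show (-1 + 1 : ℤ) = 0 by norm_num, sq_bstar_zero hm,
      bstar_of_one_lt_natAbs m (by decide : 1 < (-1 - 1 : ℤ).natAbs)]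
    ring
  · simp [bstar_of_one_lt_natAbs m hj]

theorem hessH_eigen_bstar_general (m : ℝ) (hm : 0 < m) :
    (∀ j : ℤ, hessH (bstar m) (bstar m) j = ((-(42 * m / 11) : ℝ) : ℂ) * bstar m j) ∧
    (∀ j : ℤ, ((14 * m / 11 : ℝ) : ℂ) * (Complex.I * bstar m j)
        + hessH (bstar m) (fun k => Complex.I * bstar m k) j = 0) := by
  refine ⟨fun j => ?_, fun j => ?_⟩
  · rw [hessH_self, gradH_bstar hm.le]
    push_cast
    ring
  · rw [hessH_I_mul, gradH_bstar hm.le]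
    push_cast
    ring

/-- At the real 3-mode minimizer `b*` of mass `m`: `∇²H(b*) b* = −(42m/11) b*`, and
`i b*` lies in the kernel of `(14m/11) I + ∇²H(b*)`. -/
theorem hessH_eigen_bstar (N : ℕ) (hN : 2 ≤ N) (m : ℝ) (hm : 0 < m) :
    (∀ j : ℤ, hessH (bstar m) (bstar m) j = ((-(42 * m / 11) : ℝ) : ℂ) * bstar m j) ∧
    (∀ j : ℤ, ((14 * m / 11 : ℝ) : ℂ) * (Complex.I * bstar m j)
        + hessH (bstar m) (fun k => Complex.I * bstar m k) j = 0) :=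
  hessH_eigen_bstar_general m hm
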